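/- arXiv:2012.04115 — 4 statements merged into one kernel-verified Lean document; each statement's English description precedes it below -/
import Mathlib

section
/- Let X be a random variable with values in [0, E] for some E < 1, mean μ and variance σ². Then E[−log(1−X)] ≤ μ + σ² + μ² + (σ²/(0.6 − μ)²)·(−log(1−E)), provided μ < 0.6. -/
/-!
On `{X ≤ 0.6}` one has `-log (1 - X) ≤ X + X²`, while on `{X > 0.6}` the value `-log (1 - X)`
is at most `-log (1 - E)` and Chebyshev's weight `(X - μ)² / (0.6 - μ)²` is at least `1`. Adding the
two bounds pointwise and integrating, `E[X²] = σ² + μ²` gives the claim.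
-/

open MeasureTheory ProbabilityTheory

/-- On `[0, 0.6]` already the cubic Taylor polynomial of `exp` at `x + x²` dominates `1 / (1 - x)`. -/
lemma Real.neg_log_one_sub_le_add_sq {x : ℝ} (hx₀ : 0 ≤ x) (hx : x ≤ 0.6) :
    -Real.log (1 - x) ≤ x + x ^ 2 := by
  set s := x + x ^ 2 with hs
  have hs₀ : 0 ≤ s := by positivity
  have hexp : 1 + s + s ^ 2 / 2 + s ^ 3 / 6 ≤ Real.exp s := by
    have := Real.sum_le_exp_of_nonneg hs₀ 4
    simp only [Finset.sum_range_succ, Finset.sum_range_zero, Nat.factorial] at this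
    norm_num at this
    linarith
  have hpoly : 1 ≤ (1 - x) * (1 + s + s ^ 2 / 2 + s ^ 3 / 6) := by
    rw [hs]; norm_num at hx
    nlinarith [pow_nonneg hx₀ 2, pow_nonneg hx₀ 3, pow_nonneg hx₀ 4, pow_nonneg hx₀ 5]
  have hx₁ : 0 < 1 - x := by norm_num at hx; linarith
  have hprod : 1 ≤ (1 - x) * Real.exp s :=
    hpoly.trans (mul_le_mul_of_nonneg_left hexp hx₁.le)
  have : Real.exp (-s) ≤ 1 - x := by
    rw [Real.exp_neg, inv_le_iff_one_le_mul₀ (Real.exp_pos s)]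
    linarith
  linarith [(Real.le_log_iff_exp_le hx₁).2 this]

lemma Real.neg_log_one_sub_le_of_le {x E : ℝ} (hxE : x ≤ E) (hE : E < 1) :
    -Real.log (1 - x) ≤ -Real.log (1 - E) := by
  linarith [Real.log_le_log (by linarith : (0 : ℝ) < 1 - E) (by linarith : 1 - E ≤ 1 - x)]

lemma Real.neg_log_one_sub_le_add_sq_add_chebyshev {x μ E : ℝ} (hx₀ : 0 ≤ x) (hxE : x ≤ E)
    (hE : E < 1) (hμ : μ < 0.6) :
    -Real.log (1 - x) ≤ x + x ^ 2 + (x - μ) ^ 2 / (0.6 - μ) ^ 2 * -Real.log (1 - E) := by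
  have hL : 0 ≤ -Real.log (1 - E) :=
    neg_nonneg.2 (Real.log_nonpos (by linarith) (by linarith))
  by_cases hx : x ≤ 0.6
  · have := Real.neg_log_one_sub_le_add_sq hx₀ hx
    have : 0 ≤ (x - μ) ^ 2 / (0.6 - μ) ^ 2 * -Real.log (1 - E) := by positivity
    linarith
  · have hweight : 1 ≤ (x - μ) ^ 2 / (0.6 - μ) ^ 2 := by
      rw [one_le_div (by nlinarith)]
      nlinarith
    nlinarith [Real.neg_log_one_sub_le_of_le hxE hE]

lemma integral_sq_eq_integral_sq_sub_add_sq {Ω : Type*} [MeasurableSpace Ω] {P : Measure Ω}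
    [IsProbabilityMeasure P] {X : Ω → ℝ} (hX : MemLp X 2 P) :
    ∫ ω, X ω ^ 2 ∂P = ∫ ω, (X ω - ∫ ω, X ω ∂P) ^ 2 ∂P + (∫ ω, X ω ∂P) ^ 2 := by
  have := variance_eq_sub hX
  rw [variance_eq_integral hX.aestronglyMeasurable.aemeasurable] at this
  simp only [Pi.pow_apply] at this
  linarith

/-- Chebyshev-based bound: for X valued in [0,E], E < 1, with mean μ < 0.6 and
variance σ², E[-log(1-X)] ≤ μ + σ² + μ² + (σ²/(0.6-μ)²)·(-log(1-E)). -/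
theorem stmt_5 {Ω : Type*} [MeasurableSpace Ω] (P : Measure Ω) [IsProbabilityMeasure P]
    (X : Ω → ℝ) (E : ℝ) (hE : E < 1)
    (hX0 : ∀ ω, 0 ≤ X ω) (hXE : ∀ ω, X ω ≤ E) (hXm : Measurable X)
    (μ σ2 : ℝ) (hμ : μ = ∫ ω, X ω ∂P) (hσ2 : σ2 = ∫ ω, (X ω - μ) ^ 2 ∂P)
    (hμ06 : μ < 0.6) :
    ∫ ω, -Real.log (1 - X ω) ∂P ≤
      μ + σ2 + μ ^ 2 + (σ2 / (0.6 - μ) ^ 2) * (-Real.log (1 - E)) := by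
  set L := -Real.log (1 - E)
  have hX : MemLp X 2 P := .of_bound hXm.aestronglyMeasurable E <| .of_forall fun ω => by
    rw [Real.norm_of_nonneg (hX0 ω)]; exact hXE ω
  have hX₁ : Integrable X P := hX.integrable one_le_two
  have hX₂ : Integrable (fun ω => X ω ^ 2) P := hX.integrable_sq
  have hX₁₂ : Integrable (fun ω => X ω + X ω ^ 2) P := hX₁.add hX₂
  have hV : Integrable (fun ω => (X ω - μ) ^ 2 / (0.6 - μ) ^ 2 * L) P :=
    (((hX.sub (memLp_const μ)).integrable_sq).div_const _).mul_const _
  have hlog : Integrable (fun ω => -Real.log (1 - X ω)) P :=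
    .of_bound (measurable_const.sub hXm).log.neg.aestronglyMeasurable L <| .of_forall fun ω => by
      rw [Real.norm_of_nonneg <| neg_nonneg.2 <|
        Real.log_nonpos (by linarith [hXE ω]) (by linarith [hX0 ω])]
      exact Real.neg_log_one_sub_le_of_le (hXE ω) hE
  calc ∫ ω, -Real.log (1 - X ω) ∂P
      ≤ ∫ ω, X ω + X ω ^ 2 + (X ω - μ) ^ 2 / (0.6 - μ) ^ 2 * L ∂P :=
        integral_mono hlog (hX₁₂.add hV) fun ω =>
          Real.neg_log_one_sub_le_add_sq_add_chebyshev (hX0 ω) (hXE ω) hE hμ06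
    _ = μ + (σ2 + μ ^ 2) + σ2 / (0.6 - μ) ^ 2 * L := by
        rw [integral_add hX₁₂ hV, integral_add hX₁ hX₂, integral_mul_const,
          integral_div, integral_sq_eq_integral_sq_sub_add_sq hX, ← hμ, ← hσ2]
    _ = μ + σ2 + μ ^ 2 + σ2 / (0.6 - μ) ^ 2 * L := by ring
end

section
/- Assume the expected generalization error of the Bayesian posterior satisfies ⟨ε(m)⟩ ~ b·m^{−α} with 0 < α < 1, and that the per-point posterior error P_e(m) is uniformly bounded by some E < 1 with Var(P_e(m)) = o(⟨ε(m)⟩). Then the expected negative log marginal likelihood satisfies −⟨log P(S_m)⟩ ~ (b/(1−α))·m^{1−α} as m → ∞, and hence −⟨log P(S_m)⟩/m ~ (1/(1−α))·⟨ε(m)⟩. -/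
open MeasureTheory ProbabilityTheory Filter Asymptotics Finset Topology
open scoped ENNReal

/-!
Since `P(S_m) = ∏_{k<m} (1 - P_e(k))`, the quantity `-⟨log P(S_m)⟩` is the sum over `k < m` of the
expected one-step log losses `⟨-log (1 - P_e(k))⟩`. From `x ≤ -log (1 - x) ≤ x + x² / (1 - E)` on
`[0, E]`, each loss lies between `⟨ε(k)⟩` and `⟨ε(k)⟩ + (Var P_e(k) + ⟨ε(k)⟩²) / (1 - E)`, so it is
asymptotic to `⟨ε(k)⟩ ~ b k^(-α)`. Equivalence survives summation against a nonnegative divergent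
series, and `b k^(-α) ~ b / (1 - α) ((k + 1)^(1 - α) - k^(1 - α))`, which telescopes to
`b / (1 - α) m^(1 - α)`.
-/

namespace Asymptotics

theorem isEquivalent_one_add_rpow_sub_one {p : ℝ} (hp : p ≠ 0) :
    (fun t : ℝ => (1 + t) ^ p - 1) ~[𝓝 0] fun t => p * t := by
  have hderiv : HasDerivAt (fun t : ℝ => (1 + t) ^ p) p 0 := by
    simpa using (Real.hasDerivAt_rpow_const (x := 1 + 0) (p := p)
      (Or.inl (by norm_num))).comp_const_add 1 0
  have := hasDerivAt_iff_isLittleO.1 hderiv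
  simp only [add_zero, Real.one_rpow, sub_zero, smul_eq_mul] at this
  exact (this.trans_isBigO (isBigO_self_const_mul hp id _)).congr_left fun t => by
    simp only [Pi.sub_apply]; ring

theorem isEquivalent_rpow_add_one_sub_rpow {p : ℝ} (hp : p ≠ 0) :
    (fun x : ℝ => (x + 1) ^ p - x ^ p) ~[atTop] fun x => p * x ^ (p - 1) := by
  have h := (IsEquivalent.refl (u := fun x : ℝ => x ^ p)).mul
    ((isEquivalent_one_add_rpow_sub_one hp).comp_tendsto tendsto_inv_atTop_zero)
  refine (h.congr_left ?_).congr_right ?_ <;>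
    filter_upwards [eventually_gt_atTop 0] with x hx <;>
    simp only [Pi.mul_apply, Function.comp_apply]
  · rw [mul_sub, mul_one, ← Real.mul_rpow hx.le (by positivity), mul_add, mul_one,
      mul_inv_cancel₀ hx.ne', add_comm]
  · rw [Real.rpow_sub_one hx.ne']
    ring

theorem IsEquivalent.sum_range {u v : ℕ → ℝ} (huv : u ~[atTop] v) (hv : 0 ≤ v)
    (hsum : Tendsto (fun n => ∑ i ∈ range n, v i) atTop atTop) :
    (fun n => ∑ i ∈ range n, u i) ~[atTop] fun n => ∑ i ∈ range n, v i :=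
  (huv.isLittleO.sum_range hv hsum).congr_left fun n => by simp [sum_sub_distrib]

theorem IsEquivalent.sum_range_rpow {u : ℕ → ℝ} {c p : ℝ} (hc : 0 < c) (hp : 0 < p)
    (h : u ~[atTop] fun k => c * (k : ℝ) ^ (p - 1)) :
    (fun n => ∑ i ∈ range n, u i) ~[atTop] fun n => c / p * (n : ℝ) ^ p := by
  set v : ℕ → ℝ := fun k => c / p * (((k : ℝ) + 1) ^ p - (k : ℝ) ^ p)
  have hv : v ~[atTop] fun k => c * (k : ℝ) ^ (p - 1) := by
    have := (IsEquivalent.refl (u := fun _ : ℕ => c / p)).mul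
      ((isEquivalent_rpow_add_one_sub_rpow hp.ne').comp_tendsto tendsto_natCast_atTop_atTop)
    refine this.congr_right (Eventually.of_forall fun k => ?_)
    simp only [Pi.mul_apply, Function.comp_apply]
    field_simp
  have hv0 : 0 ≤ v := fun k =>
    mul_nonneg (div_pos hc hp).le (sub_nonneg.2 (by gcongr; linarith))
  have hsum : (fun n => ∑ i ∈ range n, v i) = fun n : ℕ => c / p * (n : ℝ) ^ p := by
    ext n
    have := sum_range_sub (fun k : ℕ => (k : ℝ) ^ p) n
    push_cast at this
    rw [← mul_sum, this, Real.zero_rpow hp.ne', sub_zero]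
  rw [← hsum]
  refine (h.trans hv.symm).sum_range hv0 ?_
  rw [hsum]
  exact ((tendsto_rpow_atTop hp).comp tendsto_natCast_atTop_atTop).const_mul_atTop (div_pos hc hp)

theorem isEquivalent_of_le_of_le_add {α : Type*} {l : Filter α} {u v r : α → ℝ}
    (hvu : ∀ x, v x ≤ u x) (huv : ∀ x, u x ≤ v x + r x) (hr : r =o[l] v) : u ~[l] v := by
  refine IsBigO.trans_isLittleO (IsBigO.of_bound 1 (Eventually.of_forall fun x => ?_)) hr
  rw [one_mul, Pi.sub_apply, Real.norm_of_nonneg (sub_nonneg.2 (hvu x))]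
  exact (sub_le_iff_le_add'.2 (huv x)).trans (Real.le_norm_self _)

end Asymptotics

namespace Real

theorem le_neg_log_one_sub {x : ℝ} (hx : x < 1) : x ≤ -log (1 - x) := by
  linarith [log_le_sub_one_of_pos (sub_pos.2 hx)]

theorem neg_log_one_sub_le {x E : ℝ} (hxE : x ≤ E) (hE : E < 1) :
    -log (1 - x) ≤ x + x ^ 2 / (1 - E) := by
  have hx : 0 < 1 - x := by linarith
  have hlog := one_sub_inv_le_log_of_pos hx
  have hinv : (1 - x)⁻¹ = 1 + x + x ^ 2 / (1 - x) := by field_simp; ring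
  have hsq : x ^ 2 / (1 - x) ≤ x ^ 2 / (1 - E) :=
    div_le_div_of_nonneg_left (sq_nonneg x) (by linarith) (by linarith)
  linarith

end Real

namespace MeasureTheory

variable {Ω : Type*} [MeasurableSpace Ω] {μ : Measure Ω} {X : Ω → ℝ} {E : ℝ}

theorem memLp_of_nonneg_of_le [IsFiniteMeasure μ] (hX : Measurable X) (hX0 : ∀ ω, 0 ≤ X ω)
    (hXE : ∀ ω, X ω ≤ E) (p : ℝ≥0∞) : MemLp X p μ :=
  .of_bound hX.aestronglyMeasurable E
    (ae_of_all _ fun ω => by rw [Real.norm_of_nonneg (hX0 ω)]; exact hXE ω)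

theorem integrable_log_one_sub [IsFiniteMeasure μ] (hX : Measurable X) (hX0 : ∀ ω, 0 ≤ X ω)
    (hXE : ∀ ω, X ω ≤ E) (hE : E < 1) : Integrable (fun ω => Real.log (1 - X ω)) μ := by
  refine .of_bound (Real.measurable_log.comp (measurable_const.sub hX)).aestronglyMeasurable
    |Real.log (1 - E)| (ae_of_all _ fun ω => ?_)
  have hlog_le : Real.log (1 - E) ≤ Real.log (1 - X ω) :=
    Real.log_le_log (by linarith) (by linarith [hXE ω])
  have hlog_nonpos : Real.log (1 - X ω) ≤ 0 :=
    Real.log_nonpos (by linarith [hXE ω]) (by linarith [hX0 ω])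
  rw [Real.norm_eq_abs, abs_le]
  constructor <;> linarith [neg_abs_le (Real.log (1 - E)), abs_nonneg (Real.log (1 - E))]

theorem integral_le_integral_neg_log_one_sub (hX : Integrable X μ)
    (hlog : Integrable (fun ω => Real.log (1 - X ω)) μ) (hX1 : ∀ ω, X ω < 1) :
    ∫ ω, X ω ∂μ ≤ ∫ ω, -Real.log (1 - X ω) ∂μ :=
  integral_mono hX hlog.neg fun ω => Real.le_neg_log_one_sub (hX1 ω)

theorem integral_log_eq_sum_integral_log {f g : ℕ → Ω → ℝ} (hf0 : ∀ ω, f 0 ω = 1)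
    (hf : ∀ m ω, f (m + 1) ω = f m ω * g m ω) (hg : ∀ m ω, g m ω ≠ 0)
    (hlog : ∀ m, Integrable (fun ω => Real.log (g m ω)) μ) (m : ℕ) :
    ∫ ω, Real.log (f m ω) ∂μ = ∑ k ∈ range m, ∫ ω, Real.log (g k ω) ∂μ := by
  have hprod : ∀ ω, f m ω = ∏ k ∈ range m, g k ω := fun ω =>
    (prod_range_induction (g · ω) (f · ω) (hf0 ω) m fun k _ => hf k ω).symm
  rw [← integral_finsetSum _ fun k _ => hlog k]
  congr 1 with ω
  rw [hprod, Real.log_prod fun k _ => hg k ω]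

end MeasureTheory

namespace ProbabilityTheory

variable {Ω : Type*} [MeasurableSpace Ω] {μ : Measure Ω} {X : Ω → ℝ} {E : ℝ}

theorem integral_neg_log_one_sub_le [IsProbabilityMeasure μ] (hX : Measurable X)
    (hX0 : ∀ ω, 0 ≤ X ω) (hXE : ∀ ω, X ω ≤ E) (hE : E < 1) :
    ∫ ω, -Real.log (1 - X ω) ∂μ ≤ μ[X] + (Var[X; μ] + μ[X] ^ 2) / (1 - E) := by
  have hX2 : MemLp X 2 μ := memLp_of_nonneg_of_le hX hX0 hXE 2
  have hXsq : Integrable (fun ω => X ω ^ 2) μ := hX2.integrable_sq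
  calc ∫ ω, -Real.log (1 - X ω) ∂μ ≤ ∫ ω, (X ω + X ω ^ 2 / (1 - E)) ∂μ :=
        integral_mono (integrable_log_one_sub hX hX0 hXE hE).neg
          ((hX2.integrable one_le_two).add (hXsq.div_const _))
          fun ω => Real.neg_log_one_sub_le (hXE ω) hE
    _ = μ[X] + (Var[X; μ] + μ[X] ^ 2) / (1 - E) := by
        rw [integral_add (hX2.integrable one_le_two) (hXsq.div_const _), integral_div,
          variance_eq_sub hX2]
        simp

theorem isEquivalent_integral_neg_log_one_sub [IsProbabilityMeasure μ] {ι : Type*}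
    {l : Filter ι} {P : ι → Ω → ℝ} (hP : ∀ i, Measurable (P i)) (hP0 : ∀ i ω, 0 ≤ P i ω)
    (hPE : ∀ i ω, P i ω ≤ E) (hE : E < 1)
    (hvar : (fun i => Var[P i; μ]) =o[l] fun i => μ[P i])
    (hmean : Tendsto (fun i => μ[P i]) l (𝓝 0)) :
    (fun i => ∫ ω, -Real.log (1 - P i ω) ∂μ) ~[l] fun i => μ[P i] := by
  have hsq : (fun i => μ[P i] ^ 2) =o[l] fun i => μ[P i] :=
    (isLittleO_pow_id one_lt_two).comp_tendsto hmean
  refine isEquivalent_of_le_of_le_add (r := fun i => (Var[P i; μ] + μ[P i] ^ 2) / (1 - E))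
    (fun i => ?_) (fun i => integral_neg_log_one_sub_le (hP i) (hP0 i) (hPE i) hE) ?_
  · exact integral_le_integral_neg_log_one_sub
      ((memLp_of_nonneg_of_le (hP i) (hP0 i) (hPE i) 1).integrable le_rfl)
      (integrable_log_one_sub (hP i) (hP0 i) (hPE i) hE) fun ω => (hPE i ω).trans_lt hE
  · simpa only [div_eq_mul_inv, mul_comm _ (1 - E)⁻¹] using
      (hvar.add hsq).const_mul_left (1 - E)⁻¹

end ProbabilityTheory

theorem stmt_8_general {Ω : Type*} [MeasurableSpace Ω] (μ : Measure Ω) [IsProbabilityMeasure μ]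
    (PS : ℕ → Ω → ℝ) (Pe : ℕ → Ω → ℝ) (E b α : ℝ)
    (hE : E < 1) (hb : 0 < b) (hα0 : 0 < α) (hα1 : α < 1)
    (hPS0 : ∀ ω, PS 0 ω = 1)
    (hchain : ∀ m ω, PS (m + 1) ω = PS m ω * (1 - Pe m ω))
    (hPe0 : ∀ m ω, 0 ≤ Pe m ω) (hPeE : ∀ m ω, Pe m ω ≤ E)
    (hPemeas : ∀ m, Measurable (Pe m))
    (eps : ℕ → ℝ) (heps : ∀ m, eps m = ∫ ω, Pe m ω ∂μ)
    (hepspos : ∀ m, 0 < eps m)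
    (hasym : Tendsto (fun m : ℕ => eps m / (b * (m : ℝ) ^ (-α))) atTop (nhds 1))
    (hvar : Tendsto (fun m : ℕ => (∫ ω, (Pe m ω - eps m) ^ 2 ∂μ) / eps m)
      atTop (nhds 0)) :
    Tendsto (fun m : ℕ =>
        (-∫ ω, Real.log (PS m ω) ∂μ) / ((b / (1 - α)) * (m : ℝ) ^ (1 - α)))
      atTop (nhds 1) ∧
    Tendsto (fun m : ℕ =>
        ((-∫ ω, Real.log (PS m ω) ∂μ) / m) / ((1 / (1 - α)) * eps m))
      atTop (nhds 1) := by
  obtain rfl : eps = fun m => ∫ ω, Pe m ω ∂μ := funext heps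
  have hm_pos : ∀ᶠ m : ℕ in atTop, (0 : ℝ) < m :=
    (eventually_gt_atTop 0).mono fun _ => Nat.cast_pos.2
  have hlog m := integrable_log_one_sub (μ := μ) (hPemeas m) (hPe0 m) (hPeE m) hE
  have hL m : -∫ ω, Real.log (PS m ω) ∂μ = ∑ k ∈ range m, ∫ ω, -Real.log (1 - Pe k ω) ∂μ := by
    rw [integral_log_eq_sum_integral_log hPS0 hchain
      (fun k ω => (sub_pos.2 ((hPeE k ω).trans_lt hE)).ne') hlog m, ← sum_neg_distrib]
    simp only [integral_neg]
  have heps_equiv : (fun m => ∫ ω, Pe m ω ∂μ) ~[atTop] fun m : ℕ => b * (m : ℝ) ^ (-α) :=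
    (isEquivalent_iff_tendsto_one (hm_pos.mono fun m hm =>
      (mul_pos hb (Real.rpow_pos_of_pos hm _)).ne')).2 hasym
  have heps_zero : Tendsto (fun m => ∫ ω, Pe m ω ∂μ) atTop (𝓝 0) :=
    heps_equiv.symm.tendsto_nhds <| by
      simpa using ((tendsto_rpow_neg_atTop hα0).comp tendsto_natCast_atTop_atTop).const_mul b
  have hvar_o : (fun m => Var[Pe m; μ]) =o[atTop] fun m => ∫ ω, Pe m ω ∂μ := by
    refine (isLittleO_iff_tendsto' (.of_forall fun m h => absurd h (hepspos m).ne')).2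
      (hvar.congr fun m => ?_)
    rw [variance_eq_integral (hPemeas m).aemeasurable]
  have hL_equiv : (fun m => -∫ ω, Real.log (PS m ω) ∂μ) ~[atTop]
      fun m : ℕ => b / (1 - α) * (m : ℝ) ^ (1 - α) := by
    simp only [hL]
    refine IsEquivalent.sum_range_rpow hb (sub_pos.2 hα1) ?_
    rw [sub_sub_cancel_left]
    exact (isEquivalent_integral_neg_log_one_sub hPemeas hPe0 hPeE hE hvar_o heps_zero).trans
      heps_equiv
  refine ⟨(isEquivalent_iff_tendsto_one ?_).1 hL_equiv, (isEquivalent_iff_tendsto_one ?_).1 ?_⟩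
  · exact hm_pos.mono fun m hm =>
      (mul_pos (div_pos hb (sub_pos.2 hα1)) (Real.rpow_pos_of_pos hm _)).ne'
  · exact .of_forall fun m => (mul_pos (one_div_pos.2 (sub_pos.2 hα1)) (hepspos m)).ne'
  · refine ((hL_equiv.div (IsEquivalent.refl (u := fun m : ℕ => (m : ℝ)))).congr_right ?_).trans
      ((IsEquivalent.refl (u := fun _ : ℕ => 1 / (1 - α))).mul heps_equiv.symm)
    filter_upwards [hm_pos] with m hm
    simp only [Pi.div_apply, Pi.mul_apply]
    rw [Real.rpow_sub hm, Real.rpow_one, Real.rpow_neg hm.le]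
    field_simp

/-- Theorem 2 (asymptotic optimality of the marginal-likelihood PAC-Bayes bound):
if the expected error ⟨ε(m)⟩ ~ b·m^(-α) with 0 < α < 1, the per-point posterior
error P_e(m) is uniformly bounded by E < 1 and Var(P_e(m)) = o(⟨ε(m)⟩), then
-⟨log P(S_m)⟩ ~ (b/(1-α))·m^(1-α), and -⟨log P(S_m)⟩/m ~ (1/(1-α))·⟨ε(m)⟩. -/
theorem stmt_8 {Ω : Type*} [MeasurableSpace Ω] (μ : Measure Ω) [IsProbabilityMeasure μ]
    (PS : ℕ → Ω → ℝ) (Pe : ℕ → Ω → ℝ) (E b α : ℝ)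
    (hE : E < 1) (hb : 0 < b) (hα0 : 0 < α) (hα1 : α < 1)
    (hPS0 : ∀ ω, PS 0 ω = 1)
    (hPSpos : ∀ m ω, 0 < PS m ω)
    (hchain : ∀ m ω, PS (m + 1) ω = PS m ω * (1 - Pe m ω))
    (hPe0 : ∀ m ω, 0 ≤ Pe m ω) (hPeE : ∀ m ω, Pe m ω ≤ E)
    (hPemeas : ∀ m, Measurable (Pe m))
    (eps : ℕ → ℝ) (heps : ∀ m, eps m = ∫ ω, Pe m ω ∂μ)
    (hepspos : ∀ m, 0 < eps m)
    (hasym : Tendsto (fun m : ℕ => eps m / (b * (m : ℝ) ^ (-α))) atTop (nhds 1))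
    (hvar : Tendsto (fun m : ℕ => (∫ ω, (Pe m ω - eps m) ^ 2 ∂μ) / eps m)
      atTop (nhds 0)) :
    Tendsto (fun m : ℕ =>
        (-∫ ω, Real.log (PS m ω) ∂μ) / ((b / (1 - α)) * (m : ℝ) ^ (1 - α)))
      atTop (nhds 1) ∧
    Tendsto (fun m : ℕ =>
        ((-∫ ω, Real.log (PS m ω) ∂μ) / m) / ((1 / (1 - α)) * eps m))
      atTop (nhds 1) :=
  stmt_8_general μ PS Pe E b α hE hb hα0 hα1 hPS0 hchain hPe0 hPeE hPemeas eps heps hepspos hasym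
    hvar
end

section
/- Let H be a countable hypothesis class, P a probability distribution on H, and D a data distribution over X×{0,1}. For any δ ∈ (0,1], with probability at least 1−δ over an i.i.d. sample S of size m, every hypothesis h ∈ H with zero training error on S satisfies ε(h) ≤ (ln(1/P(h)) + ln(1/δ))/m. -/
/-!
If `ε(h)` exceeds its bound `β(h) = (ln(1/P(h)) + ln(1/δ))/m`, then `m` independent samples are
all classified correctly by `h` with probability `(1 - ε(h))^m ≤ exp(-m ε(h)) < P(h) δ`, and the
bound `β(h)` is chosen exactly so that `exp(-m β(h)) = P(h) δ`. Since the prior weights sum to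
one, the union bound over the countable class `H` puts the total failure probability below `δ`.
-/

open MeasureTheory

theorem one_sub_pow_le_exp_neg_mul {x : ℝ} (hx : x ≤ 1) (n : ℕ) :
    (1 - x) ^ n ≤ Real.exp (-(n * x)) :=
  calc (1 - x) ^ n ≤ Real.exp (-x) ^ n :=
        pow_le_pow_left₀ (by linarith) (Real.one_sub_le_exp_neg x) n
    _ = Real.exp (-(n * x)) := by rw [← Real.exp_nat_mul, mul_neg]

theorem measure_pi_univ_pi_compl_le_exp {Ω ι : Type*} [MeasurableSpace Ω] [Fintype ι]
    (μ : Measure Ω) [IsProbabilityMeasure μ] {s : Set Ω} (hs : MeasurableSet s) :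
    Measure.pi (fun _ : ι => μ) (Set.univ.pi fun _ => sᶜ) ≤
      ENNReal.ofReal (Real.exp (-(Fintype.card ι * μ.real s))) := by
  rw [Measure.pi_pi, Finset.prod_const, Finset.card_univ, ← ofReal_measureReal,
    probReal_compl_eq_one_sub hs, ← ENNReal.ofReal_pow (sub_nonneg.2 measureReal_le_one)]
  exact ENNReal.ofReal_le_ofReal (one_sub_pow_le_exp_neg_mul measureReal_le_one _)

theorem exp_neg_mul_le_mul_of_div_lt {p δ m ε : ℝ} (hp : 0 < p) (hδ : 0 < δ) (hm : 0 < m)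
    (hε : (Real.log (1 / p) + Real.log (1 / δ)) / m < ε) :
    Real.exp (-(m * ε)) ≤ p * δ := by
  have hlog : Real.log (1 / p) + Real.log (1 / δ) = -Real.log (p * δ) := by
    rw [one_div, one_div, Real.log_inv, Real.log_inv, Real.log_mul hp.ne' hδ.ne']; ring
  rw [div_lt_iff₀ hm, hlog] at hε
  calc Real.exp (-(m * ε)) ≤ Real.exp (Real.log (p * δ)) := Real.exp_le_exp.2 (by linarith)
    _ = p * δ := Real.exp_log (mul_pos hp hδ)

theorem measure_iUnion_le_ofReal_of_le_weight {Ω ι : Type*} [MeasurableSpace Ω] [Countable ι]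
    (μ : Measure Ω) {B : ι → Set Ω} {w : ι → ℝ} {δ : ℝ} (hw0 : ∀ i, 0 ≤ w i)
    (hw : ∑' i, w i = 1) (hδ : 0 ≤ δ) (hB : ∀ i, μ (B i) ≤ ENNReal.ofReal (w i * δ)) :
    μ (⋃ i, B i) ≤ ENNReal.ofReal δ := by
  have hsum : Summable w := by
    by_contra h
    rw [tsum_eq_zero_of_not_summable h] at hw
    exact zero_ne_one hw
  calc μ (⋃ i, B i) ≤ ∑' i, μ (B i) := measure_iUnion_le B
    _ ≤ ∑' i, ENNReal.ofReal (w i * δ) := ENNReal.tsum_le_tsum hB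
    _ = ENNReal.ofReal (∑' i, w i * δ) :=
        (ENNReal.ofReal_tsum_of_nonneg (fun i => mul_nonneg (hw0 i) hδ) (hsum.mul_right δ)).symm
    _ = ENNReal.ofReal δ := by rw [tsum_mul_right, hw, one_mul]

theorem one_sub_le_measure_compl {Ω : Type*} [MeasurableSpace Ω] (μ : Measure Ω)
    [IsProbabilityMeasure μ] (s : Set Ω) : 1 - μ s ≤ μ sᶜ := by
  rw [tsub_le_iff_left, ← measure_univ (μ := μ)]
  exact measure_univ_le_add_compl s

theorem stmt_9_general {X H : Type*} [MeasurableSpace X] [Countable H]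
    (D : Measure (X × Bool)) [IsProbabilityMeasure D]
    (hyp : H → X → Bool) (P : H → ℝ)
    (hP0 : ∀ h, 0 < P h) (hPsum : ∑' h, P h = 1)
    (hmeas : ∀ h : H, MeasurableSet {p : X × Bool | hyp h p.1 ≠ p.2})
    (m : ℕ) (hm : 0 < m) (δ : ℝ) (hδ0 : 0 < δ) :
    (Measure.pi (fun _ : Fin m => D))
      {S : Fin m → X × Bool | ∀ h : H, (∀ i, hyp h (S i).1 = (S i).2) →
        (D {p : X × Bool | hyp h p.1 ≠ p.2}).toReal ≤
          (Real.log (1 / P h) + Real.log (1 / δ)) / m} ≥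
      ENNReal.ofReal (1 - δ) := by
  set err : H → Set (X × Bool) := fun h => {p | hyp h p.1 ≠ p.2}
  set bound : H → ℝ := fun h => (Real.log (1 / P h) + Real.log (1 / δ)) / m
  set bad : H → Set (Fin m → X × Bool) :=
    fun h => {S | bound h < D.real (err h) ∧ S ∈ Set.univ.pi fun _ => (err h)ᶜ}
  have hbad : ∀ h, Measure.pi (fun _ : Fin m => D) (bad h) ≤ ENNReal.ofReal (P h * δ) := by
    intro h
    by_cases hlt : bound h < D.real (err h)
    · calc _ ≤ Measure.pi (fun _ : Fin m => D) (Set.univ.pi fun _ => (err h)ᶜ) :=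
            measure_mono fun S hS => hS.2
        _ ≤ ENNReal.ofReal (Real.exp (-(m * D.real (err h)))) := by
            simpa only [Fintype.card_fin] using
              measure_pi_univ_pi_compl_le_exp (ι := Fin m) D (hmeas h)
        _ ≤ ENNReal.ofReal (P h * δ) := ENNReal.ofReal_le_ofReal
            (exp_neg_mul_le_mul_of_div_lt (hP0 h) hδ0 (Nat.cast_pos.2 hm) hlt)
    · simp [bad, hlt]
  have hgood : (⋃ h, bad h)ᶜ ⊆ {S : Fin m → X × Bool | ∀ h : H,
      (∀ i, hyp h (S i).1 = (S i).2) → (D (err h)).toReal ≤ bound h} := by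
    intro S hS h hcons
    simp only [Set.compl_iUnion, Set.mem_iInter] at hS
    by_contra hlt
    exact hS h ⟨lt_of_not_ge hlt, fun i _ => by simpa [err] using hcons i⟩
  calc ENNReal.ofReal (1 - δ) = 1 - ENNReal.ofReal δ := by
        rw [ENNReal.ofReal_sub _ hδ0.le, ENNReal.ofReal_one]
    _ ≤ 1 - Measure.pi (fun _ : Fin m => D) (⋃ h, bad h) := tsub_le_tsub_left
        (measure_iUnion_le_ofReal_of_le_weight _ (fun h => (hP0 h).le) hPsum hδ0.le hbad) 1
    _ ≤ Measure.pi (fun _ : Fin m => D) (⋃ h, bad h)ᶜ := one_sub_le_measure_compl _ _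
    _ ≤ _ := measure_mono hgood

/-- Nonuniform SRM / Occam bound: for a countable hypothesis class H with prior P,
with probability ≥ 1-δ over an i.i.d. sample S of size m, every h consistent with
S satisfies ε(h) ≤ (ln(1/P(h)) + ln(1/δ))/m. -/
theorem stmt_9 {X H : Type*} [MeasurableSpace X] [Countable H]
    (D : Measure (X × Bool)) [IsProbabilityMeasure D]
    (hyp : H → X → Bool) (P : H → ℝ)
    (hP0 : ∀ h, 0 < P h) (hPsum : ∑' h, P h = 1)
    (hmeas : ∀ h : H, MeasurableSet {p : X × Bool | hyp h p.1 ≠ p.2})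
    (m : ℕ) (hm : 0 < m) (δ : ℝ) (hδ0 : 0 < δ) (hδ1 : δ ≤ 1) :
    (Measure.pi (fun _ : Fin m => D))
      {S : Fin m → X × Bool | ∀ h : H, (∀ i, hyp h (S i).1 = (S i).2) →
        (D {p : X × Bool | hyp h p.1 ≠ p.2}).toReal ≤
          (Real.log (1 / P h) + Real.log (1 / δ)) / m} ≥
      ENNReal.ofReal (1 - δ) :=
  stmt_9_general D hyp P hP0 hPsum hmeas m hm δ hδ0
end

section
/- Marginal-likelihood PAC-Bayes bound: For any prior distribution P on a countable hypothesis space H and any realizable data distribution D, for 0 < δ ≤ 1 and 0 < γ ≤ 1, with probability at least 1−δ over the choice of an i.i.d. sample S of m instances, with probability at least 1−γ over h drawn from the Bayesian posterior Q(h) = P(h)/P(C(S)), it holds that −ln(1 − ε(h)) < (ln(1/P(C(S))) + ln m + ln(1/δ) + ln(1/γ))/(m − 1). -/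
/-!
Give each hypothesis `h` the weight `c h = P h · (δγ/m) / q_h ^ (m-1)`, where `q_h = 1 - ε(h)`.
An i.i.d. sample of size `m` is consistent with `h` with probability `q_h ^ m`, so the expected
total weight of the hypotheses consistent with `S` is at most `δγ/m`, and by Markov's inequality
it is below `γ` with probability at least `1 - δ`. On such a realizable sample, a consistent `h`
violating the bound has `q_h ^ (m-1) ≤ P(C(S)) δγ/m`, i.e. `P h ≤ P(C(S)) · c h`; summing, these
hypotheses carry less than a `γ` fraction of the posterior mass `P(C(S))`.
-/

open MeasureTheory

lemma pos_and_pow_le_of_not_neg_log_lt {q a : ℝ} {k : ℕ} (hk : 0 < k) (hq : 0 ≤ q)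
    (ha0 : 0 < a) (ha1 : a < 1) (h : ¬ -Real.log q < -Real.log a / k) :
    0 < q ∧ q ^ k ≤ a := by
  have hk' : (0 : ℝ) < k := by exact_mod_cast hk
  have hlog : k * Real.log q ≤ Real.log a := by
    rw [not_lt, div_le_iff₀ hk'] at h
    linarith
  have hq0 : 0 < q := by
    refine hq.lt_of_ne' fun hq0 => ?_
    rw [hq0, Real.log_zero, mul_zero] at hlog
    linarith [Real.log_neg ha0 ha1]
  refine ⟨hq0, ?_⟩
  rwa [← Real.log_pow, Real.log_le_log_iff (by positivity) ha0] at hlog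

lemma div_pow_pred_mul_pow_le {b q : ℝ} (hb : 0 ≤ b) (hq0 : 0 ≤ q) (hq1 : q ≤ 1) {m : ℕ}
    (hm : m ≠ 0) : b / q ^ (m - 1) * q ^ m ≤ b := by
  rcases hq0.eq_or_lt with rfl | hq
  · simpa [zero_pow hm] using hb
  · rw [← pow_sub_one_mul hm, ← mul_assoc, div_mul_cancel₀ _ (by positivity)]
    exact mul_le_of_le_one_right hb hq1

lemma summable_and_tsum_lt_of_tsum_ofReal_lt {ι : Type*} {f : ι → ℝ} (hf : ∀ i, 0 ≤ f i)
    {t : ℝ} (h : ∑' i, ENNReal.ofReal (f i) < ENNReal.ofReal t) :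
    Summable f ∧ ∑' i, f i < t := by
  have hs : Summable f := by
    simpa only [ENNReal.toReal_ofReal (hf _)] using ENNReal.summable_toReal (h.trans_le le_top).ne
  refine ⟨hs, ?_⟩
  rw [← ENNReal.ofReal_tsum_of_nonneg hf hs, ENNReal.ofReal_lt_ofReal_iff'] at h
  exact h.1

lemma summable_of_tsum_ne_zero {ι : Type*} {f : ι → ℝ} (h : ∑' i, f i ≠ 0) : Summable f :=
  by_contra fun hs => h (tsum_eq_zero_of_not_summable hs)

section Posterior

variable {H : Type*}

noncomputable def priorMass (P : H → ℝ) (C : H → Prop) [DecidablePred C] : ℝ :=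
  ∑' h, if C h then P h else 0

variable {P : H → ℝ} (C G : H → Prop) [DecidablePred C] [DecidablePred G]

lemma summable_ite_of_nonneg (hP : ∀ h, 0 ≤ P h) (hPs : Summable P) :
    Summable fun h => if C h then P h else 0 :=
  hPs.of_nonneg_of_le (fun h => by split_ifs <;> simp [hP h])
    (fun h => by split_ifs <;> simp [hP h])

lemma priorMass_pos (hP : ∀ h, 0 < P h) (hPs : Summable P) (hC : ∃ h, C h) :
    0 < priorMass P C := by
  obtain ⟨h₀, hh₀⟩ := hC
  exact (summable_ite_of_nonneg C (fun h => (hP h).le) hPs).tsum_pos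
    (fun h => by split_ifs <;> simp [(hP h).le]) h₀ (by simp [hh₀, hP h₀])

lemma priorMass_le_tsum (hP : ∀ h, 0 ≤ P h) (hPs : Summable P) :
    priorMass P C ≤ ∑' h, P h :=
  (summable_ite_of_nonneg C hP hPs).tsum_le_tsum (fun h => by split_ifs <;> simp [hP h]) hPs

lemma one_sub_mul_priorMass_le (hP : ∀ h, 0 ≤ P h) (hPs : Summable P) {c : H → ℝ}
    (hc : ∀ h, 0 ≤ c h) (hcs : Summable fun h => if C h then c h else 0) {γ : ℝ}
    (hcγ : ∑' h, (if C h then c h else 0) ≤ γ)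
    (hbad : ∀ h, C h → ¬ G h → P h ≤ priorMass P C * c h) :
    (1 - γ) * priorMass P C ≤ priorMass P fun h => C h ∧ G h := by
  have hZ : 0 ≤ priorMass P C := tsum_nonneg fun h => by split_ifs <;> simp [hP h]
  have hpt : ∀ h, (if C h then P h else 0) ≤
      (if C h ∧ G h then P h else 0) + priorMass P C * (if C h then c h else 0) := by
    intro h
    by_cases hC : C h <;> by_cases hG : G h <;>
      simp [hC, hG, hbad, mul_nonneg hZ (hc h)]
  have hsplit : priorMass P C ≤ priorMass P (fun h => C h ∧ G h) + priorMass P C * γ :=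
    calc priorMass P C
        ≤ ∑' h, ((if C h ∧ G h then P h else 0) + priorMass P C * (if C h then c h else 0)) :=
          (summable_ite_of_nonneg C hP hPs).tsum_le_tsum hpt
            ((summable_ite_of_nonneg _ hP hPs).add (hcs.mul_left _))
      _ = priorMass P (fun h => C h ∧ G h) + priorMass P C * ∑' h, (if C h then c h else 0) := by
          rw [(summable_ite_of_nonneg _ hP hPs).tsum_add (hcs.mul_left _), tsum_mul_left]; rfl
      _ ≤ _ := by gcongr
  linarith

lemma log_one_div_add_eq_neg_log {Z δ γ : ℝ} {m : ℕ} (hZ : 0 < Z) (hδ : 0 < δ) (hγ : 0 < γ)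
    (hm : 0 < m) :
    Real.log (1 / Z) + Real.log m + Real.log (1 / δ) + Real.log (1 / γ) =
      -Real.log (Z * (δ * γ / m)) := by
  have hm' : (0 : ℝ) < m := by exact_mod_cast hm
  simp only [one_div, Real.log_inv]
  rw [Real.log_mul hZ.ne' (div_pos (mul_pos hδ hγ) hm').ne',
    Real.log_div (mul_pos hδ hγ).ne' hm'.ne', Real.log_mul hδ.ne' hγ.ne']
  ring

lemma posterior_mass_ge_of_weight_lt {q : H → ℝ} (hP0 : ∀ h, 0 < P h)
    (hPsum : ∑' h, P h = 1) (hq : ∀ h, 0 ≤ q h) {m : ℕ} (hm : 2 ≤ m) {δ γ : ℝ}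
    (hδ0 : 0 < δ) (hδ1 : δ ≤ 1) (hγ0 : 0 < γ) (hγ1 : γ ≤ 1) (hC : ∃ h, C h)
    (hw : ∑' h, ENNReal.ofReal (if C h then P h * (δ * γ / m) / q h ^ (m - 1) else 0) <
      ENNReal.ofReal γ) :
    0 < priorMass P C ∧
      priorMass P (fun h => C h ∧ -Real.log (q h) < (Real.log (1 / priorMass P C) +
        Real.log m + Real.log (1 / δ) + Real.log (1 / γ)) / (m - 1)) / priorMass P C ≥ 1 - γ := by
  have hPs : Summable P := summable_of_tsum_ne_zero (hPsum ▸ one_ne_zero)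
  set Z := priorMass P C
  have hZ0 : 0 < Z := priorMass_pos C hP0 hPs hC
  have hZ1 : Z ≤ 1 := hPsum ▸ priorMass_le_tsum C (fun h => (hP0 h).le) hPs
  have hm0 : (0 : ℝ) < m := by positivity
  have hm2 : (2 : ℝ) ≤ m := by exact_mod_cast hm
  set β := δ * γ / m
  have hβ : 0 < β := by positivity
  have ha1 : Z * β < 1 := by
    have hβ2 : β ≤ 1 / 2 := by
      rw [div_le_iff₀ hm0]
      nlinarith
    nlinarith
  have hc : ∀ h, 0 ≤ P h * β / q h ^ (m - 1) := fun h =>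
    div_nonneg (mul_nonneg (hP0 h).le hβ.le) (pow_nonneg (hq h) _)
  obtain ⟨hcs, hcγ⟩ := summable_and_tsum_lt_of_tsum_ofReal_lt
    (fun h => by split_ifs <;> simp [hc h]) hw
  rw [log_one_div_add_eq_neg_log hZ0 hδ0 hγ0 (by omega), ← Nat.cast_pred (by omega)]
  refine ⟨hZ0, ?_⟩
  rw [ge_iff_le, le_div_iff₀ hZ0]
  refine one_sub_mul_priorMass_le C _ (fun h => (hP0 h).le) hPs hc hcs hcγ.le fun h _ hbad => ?_
  obtain ⟨hqpos, hqa⟩ := pos_and_pow_le_of_not_neg_log_lt (by omega) (hq h) (by positivity) ha1 hbad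
  rw [mul_div_assoc', le_div_iff₀ (by positivity)]
  calc P h * q h ^ (m - 1) ≤ P h * (Z * β) := by gcongr; exact (hP0 h).le
    _ = Z * (P h * β) := by ring

end Posterior

theorem MeasureTheory.Measure.pi_setOf_forall_mem {ι α : Type*} [Fintype ι]
    [MeasurableSpace α]
    (μ : Measure α) [SigmaFinite μ] (A : Set α) :
    Measure.pi (fun _ : ι => μ) {x | ∀ i, x i ∈ A} = μ A ^ Fintype.card ι := by
  have : {x : ι → α | ∀ i, x i ∈ A} = Set.univ.pi fun _ => A := by ext; simp
  rw [this, Measure.pi_pi, Finset.prod_const, Finset.card_univ]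

theorem measurableSet_setOf_forall_mem {ι α : Type*} [Countable ι] [MeasurableSpace α]
    {A : Set α} (hA : MeasurableSet A) : MeasurableSet {x : ι → α | ∀ i, x i ∈ A} := by
  rw [Set.ofPred_forall]
  exact MeasurableSet.iInter fun i => measurable_pi_apply i hA

lemma MeasureTheory.Measure.pi_setOf_forall_mem_compl {ι α : Type*} [Fintype ι]
    [MeasurableSpace α]
    (μ : Measure α) [IsProbabilityMeasure μ] {B : Set α} (hB : MeasurableSet B) :
    Measure.pi (fun _ : ι => μ) {x | ∀ i, x i ∈ Bᶜ} =
      ENNReal.ofReal (1 - (μ B).toReal) ^ Fintype.card ι := by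
  rw [Measure.pi_setOf_forall_mem, ← measureReal_def, ← probReal_compl_eq_one_sub hB,
    ofReal_measureReal]

section Markov

variable {Ω ι : Type*} [MeasurableSpace Ω] [Countable ι]

theorem meas_ge_tsum_indicator_le (μ : Measure Ω) {E : ι → Set Ω}
    (hE : ∀ i, MeasurableSet (E i)) (w : ι → ENNReal) {t : ENNReal} (ht0 : t ≠ 0) (ht : t ≠ ⊤) :
    μ {ω | t ≤ ∑' i, (E i).indicator (fun _ => w i) ω} ≤ (∑' i, w i * μ (E i)) / t := by
  have hmeas : ∀ i, Measurable ((E i).indicator fun _ => w i) :=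
    fun i => measurable_const.indicator (hE i)
  refine (meas_ge_le_lintegral_div (Measurable.tsum hmeas).aemeasurable ht0 ht).trans_eq ?_
  rw [lintegral_tsum fun i => (hmeas i).aemeasurable]
  simp only [lintegral_indicator_const (hE _)]

lemma meas_ge_tsum_indicator_div_pow_le (μ : Measure Ω)
    {E : ι → Set Ω} (hE : ∀ h, MeasurableSet (E h)) {P q : ι → ℝ} (hP : ∀ h, 0 ≤ P h)
    (hPsum : ∑' h, P h = 1) (hq0 : ∀ h, 0 ≤ q h) (hq1 : ∀ h, q h ≤ 1) {m : ℕ} (hm : m ≠ 0)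
    (hμE : ∀ h, μ (E h) = ENNReal.ofReal (q h) ^ m) {β γ : ℝ} (hβ : 0 ≤ β) (hγ : 0 < γ) :
    μ {ω | ENNReal.ofReal γ ≤
        ∑' h, (E h).indicator (fun _ => ENNReal.ofReal (P h * β / q h ^ (m - 1))) ω} ≤
      ENNReal.ofReal (β / γ) := by
  have hPs : Summable P := summable_of_tsum_ne_zero (hPsum ▸ one_ne_zero)
  have hmean : ∑' h, ENNReal.ofReal (P h * β / q h ^ (m - 1)) * μ (E h) ≤ ENNReal.ofReal β :=
    calc ∑' h, ENNReal.ofReal (P h * β / q h ^ (m - 1)) * μ (E h)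
        = ∑' h, ENNReal.ofReal (P h * β / q h ^ (m - 1) * q h ^ m) := by
          refine tsum_congr fun h => ?_
          rw [hμE, ENNReal.ofReal_mul (by have := hP h; have := hq0 h; positivity),
            ENNReal.ofReal_pow (hq0 h)]
      _ ≤ ∑' h, ENNReal.ofReal (P h * β) :=
          ENNReal.tsum_le_tsum fun h => ENNReal.ofReal_le_ofReal <|
            div_pow_pred_mul_pow_le (mul_nonneg (hP h) hβ) (hq0 h) (hq1 h) hm
      _ = ENNReal.ofReal β := by
          rw [← ENNReal.ofReal_tsum_of_nonneg (fun h => mul_nonneg (hP h) hβ) (hPs.mul_right β),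
            tsum_mul_right, hPsum, one_mul]
  calc _ ≤ (∑' h, ENNReal.ofReal (P h * β / q h ^ (m - 1)) * μ (E h)) / ENNReal.ofReal γ :=
        meas_ge_tsum_indicator_le μ hE _ (by simpa using hγ) ENNReal.ofReal_ne_top
    _ ≤ ENNReal.ofReal β / ENNReal.ofReal γ := by gcongr
    _ = ENNReal.ofReal (β / γ) := (ENNReal.ofReal_div_of_pos hγ).symm

end Markov

lemma ofReal_one_sub_le_measure {Ω : Type*} [MeasurableSpace Ω] {μ : Measure Ω} {R T s : Set Ω}
    (hR : μ R = 1) {δ : ℝ} (hT : μ T ≤ ENNReal.ofReal δ) (hδ : 0 ≤ δ) (hs : R \ T ⊆ s) :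
    ENNReal.ofReal (1 - δ) ≤ μ s :=
  calc ENNReal.ofReal (1 - δ) = μ R - ENNReal.ofReal δ := by
        rw [ENNReal.ofReal_sub _ hδ, ENNReal.ofReal_one, hR]
    _ ≤ μ R - μ T := by gcongr
    _ ≤ μ (R \ T) := le_measure_sdiff
    _ ≤ μ s := measure_mono hs

open Classical in
/-- Marginal-likelihood PAC-Bayes bound: for a prior P on a countable hypothesis
class and a realizable distribution D, with probability ≥ 1-δ over the sample S
of size m, with probability ≥ 1-γ over h drawn from the Bayesian posterior
(prior restricted to the consistent set C(S)),
-ln(1-ε(h)) < (ln(1/P(C(S))) + ln m + ln(1/δ) + ln(1/γ))/(m-1). -/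
theorem stmt_13 {X H : Type*} [MeasurableSpace X] [Countable H]
    (D : Measure (X × Bool)) [IsProbabilityMeasure D]
    (hyp : H → X → Bool) (P : H → ℝ)
    (hP0 : ∀ h, 0 < P h) (hPsum : ∑' h, P h = 1)
    (hmeas : ∀ h : H, MeasurableSet {p : X × Bool | hyp h p.1 ≠ p.2})
    (m : ℕ) (hm : 2 ≤ m) (δ γ : ℝ) (hδ0 : 0 < δ) (hδ1 : δ ≤ 1)
    (hγ0 : 0 < γ) (hγ1 : γ ≤ 1)
    -- realizability: almost surely some hypothesis is consistent with the sample
    (hrealizable : (Measure.pi (fun _ : Fin m => D))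
      {S : Fin m → X × Bool | ∃ h : H, ∀ i, hyp h (S i).1 = (S i).2} = 1) :
    (Measure.pi (fun _ : Fin m => D))
      {S : Fin m → X × Bool |
        0 < (∑' h, if (∀ i, hyp h (S i).1 = (S i).2) then P h else 0) ∧
        (∑' h, if ((∀ i, hyp h (S i).1 = (S i).2) ∧
            -Real.log (1 - (D {p : X × Bool | hyp h p.1 ≠ p.2}).toReal) <
              (Real.log (1 / (∑' h', if (∀ i, hyp h' (S i).1 = (S i).2) then P h' else 0)) +
                Real.log m + Real.log (1 / δ) + Real.log (1 / γ)) / (m - 1))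
          then P h else 0) /
          (∑' h, if (∀ i, hyp h (S i).1 = (S i).2) then P h else 0) ≥ 1 - γ} ≥
      ENNReal.ofReal (1 - δ) := by
  set μ := Measure.pi (fun _ : Fin m => D)
  set q : H → ℝ := fun h => 1 - (D {p : X × Bool | hyp h p.1 ≠ p.2}).toReal
  set E : H → Set (Fin m → X × Bool) := fun h => {S | ∀ i, S i ∈ {p | hyp h p.1 ≠ p.2}ᶜ}
  set T := {S | ENNReal.ofReal γ ≤
    ∑' h, (E h).indicator (fun _ => ENNReal.ofReal (P h * (δ * γ / m) / q h ^ (m - 1))) S}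
  have hq0 : ∀ h, 0 ≤ q h := fun h => sub_nonneg.2 measureReal_le_one
  have hT : μ T ≤ ENNReal.ofReal δ := by
    refine (meas_ge_tsum_indicator_div_pow_le μ
      (fun h => measurableSet_setOf_forall_mem (hmeas h).compl) (fun h => (hP0 h).le) hPsum hq0
      (fun h => sub_le_self _ measureReal_nonneg) (by omega)
      (fun h => by simpa using Measure.pi_setOf_forall_mem_compl (ι := Fin m) D (hmeas h))
      (by positivity) hγ0).trans (ENNReal.ofReal_le_ofReal ?_)
    calc δ * γ / m / γ = δ / m := by field_simp
      _ ≤ δ := div_le_self hδ0.le (by exact_mod_cast (by omega : 1 ≤ m))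
  refine ofReal_one_sub_le_measure hrealizable hT hδ0.le fun S ⟨hC, hST⟩ => ?_
  have hw : ∑' h, ENNReal.ofReal ((if ∀ i, hyp h (S i).1 = (S i).2 then
      P h * (δ * γ / m) / q h ^ (m - 1) else 0)) < ENNReal.ofReal γ := by
    convert not_le.1 (show ¬ ENNReal.ofReal γ ≤ _ from hST) using 3 with h
    simp only [E, Set.indicator_apply, Set.mem_ofPred_eq, Set.mem_compl_iff, not_not]
    split_ifs <;> simp
  exact posterior_mass_ge_of_weight_lt _ hP0 hPsum hq0 hm hδ0 hδ1 hγ0 hγ1 hC hw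
end
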